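/- Let A be a Hopf algebra over a field k. Equip A ⊗_k A with the left A-module structure induced by the comultiplication, a · (x ⊗ y) := Σ a⁽¹⁾x ⊗ a⁽²⁾y. Then A ⊗_k A is a free left A-module, and for any k-basis 𝔸 of A the set {1 ⊗ b | b ∈ 𝔸} is an A-basis of A ⊗_k A. -/

import Mathlib

/-!
The map `x ⊗ y ↦ Δ(x) (1 ⊗ y)` turns the action of `A` on the left tensor factor into the action
through `Δ`, and it is bijective, with inverse `x ⊗ y ↦ (id ⊗ S)(Δ x) (1 ⊗ y)`. Both maps commute
with right multiplication by `1 ⊗ y`, so the composites need only be checked on `x ⊗ 1`; there they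
are `x₍₁₎ ⊗ S(x₍₂₎) x₍₃₎` and `x₍₁₎ ⊗ x₍₂₎ S(x₍₃₎)` by coassociativity, which the antipode axioms
collapse to `x ⊗ 1`. The first map fixes every `1 ⊗ b`, so it carries the base change `{1 ⊗ b}`
of a `k`-basis of `A` to an `A`-basis for the action through `Δ`.
-/

open TensorProduct Coalgebra HopfAlgebra

section ExtendMulRight

variable {R A : Type*} [CommSemiring R] [Semiring A] [Algebra R A]

lemma lTensor_mul'_assoc_tmul (z : A ⊗[R] A) (y : A) :
    (LinearMap.mul' R A).lTensor A (TensorProduct.assoc R A A A (z ⊗ₜ y)) = z * (1 ⊗ₜ y) := by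
  induction z using TensorProduct.induction_on with
  | zero => simp
  | tmul a b => simp
  | add u v hu hv => simp only [add_tmul, map_add, hu, hv, add_mul]

noncomputable def extendMulRight (f : A →ₗ[R] A ⊗[R] A) : A ⊗[R] A →ₗ[R] A ⊗[R] A :=
  (LinearMap.mul' R A).lTensor A ∘ₗ (TensorProduct.assoc R A A A).toLinearMap ∘ₗ f.rTensor A

variable (f g : A →ₗ[R] A ⊗[R] A)

lemma extendMulRight_tmul (x y : A) : extendMulRight f (x ⊗ₜ y) = f x * (1 ⊗ₜ y) :=
  lTensor_mul'_assoc_tmul (f x) y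

lemma extendMulRight_mul_one_tmul (z : A ⊗[R] A) (y : A) :
    extendMulRight f (z * (1 ⊗ₜ y)) = extendMulRight f z * (1 ⊗ₜ y) := by
  induction z using TensorProduct.induction_on with
  | zero => simp
  | tmul a b => simp [extendMulRight_tmul, mul_assoc]
  | add u v hu hv => simp only [add_mul, map_add, hu, hv]

lemma extendMulRight_comp_extendMulRight :
    extendMulRight g ∘ₗ extendMulRight f = extendMulRight (extendMulRight g ∘ₗ f) := by
  ext x y
  simp [extendMulRight_tmul, extendMulRight_mul_one_tmul]

lemma extendMulRight_includeLeft :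
    extendMulRight (Algebra.TensorProduct.includeLeft : A →ₐ[R] A ⊗[R] A).toLinearMap =
      LinearMap.id := by
  ext x y
  simp [extendMulRight_tmul]

end ExtendMulRight

section Bialgebra

variable {R A : Type*} [CommSemiring R] [Semiring A] [Bialgebra R A]

lemma lTensor_mul'_comp_assoc_comp_map_comp_comul (φ ψ : A →ₗ[R] A) :
    (LinearMap.mul' R A).lTensor A ∘ₗ (TensorProduct.assoc R A A A).toLinearMap ∘ₗ
        map (map LinearMap.id φ) ψ ∘ₗ comul.rTensor A ∘ₗ comul =
      (LinearMap.mul' R A ∘ₗ map φ ψ ∘ₗ comul).lTensor A ∘ₗ comul :=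
  calc
    _ = (LinearMap.mul' R A).lTensor A ∘ₗ
        ((TensorProduct.assoc R A A A).toLinearMap ∘ₗ map (map LinearMap.id φ) ψ) ∘ₗ
          comul.rTensor A ∘ₗ comul := by
      simp only [LinearMap.comp_assoc]
    _ = (LinearMap.mul' R A).lTensor A ∘ₗ (map φ ψ).lTensor A ∘ₗ
        (TensorProduct.assoc R A A A).toLinearMap ∘ₗ comul.rTensor A ∘ₗ comul := by
      rw [← map_map_comp_assoc_eq]
      rfl
    _ = _ := by rw [coassoc]; simp only [← LinearMap.comp_assoc, ← LinearMap.lTensor_comp]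

lemma lTensor_algebraLinearMap_counit_comp_comul :
    (Algebra.linearMap R A ∘ₗ counit).lTensor A ∘ₗ comul =
      (Algebra.TensorProduct.includeLeft : A →ₐ[R] A ⊗[R] A).toLinearMap := by
  ext x
  simp [LinearMap.lTensor_comp_apply, lTensor_counit_comul]

end Bialgebra

section GaloisMap

variable (R A : Type*) [CommSemiring R] [Semiring A] [HopfAlgebra R A]

noncomputable def galoisMap : A ⊗[R] A →ₗ[R] A ⊗[R] A := extendMulRight comul

noncomputable def galoisMapInv : A ⊗[R] A →ₗ[R] A ⊗[R] A :=
  extendMulRight ((antipode R).lTensor A ∘ₗ comul)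

lemma galoisMapInv_comp_comul :
    galoisMapInv R A ∘ₗ comul =
      (Algebra.TensorProduct.includeLeft : A →ₐ[R] A ⊗[R] A).toLinearMap :=
  calc
    _ = (LinearMap.mul' R A).lTensor A ∘ₗ (TensorProduct.assoc R A A A).toLinearMap ∘ₗ
        map (map LinearMap.id (antipode R)) LinearMap.id ∘ₗ comul.rTensor A ∘ₗ comul := by
      simp only [galoisMapInv, extendMulRight, LinearMap.rTensor_comp, LinearMap.comp_assoc]
      rfl
    _ = _ := by
      rw [lTensor_mul'_comp_assoc_comp_map_comp_comul, ← LinearMap.rTensor,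
        mul_antipode_rTensor_comul, lTensor_algebraLinearMap_counit_comp_comul]

lemma galoisMap_comp_lTensor_antipode_comp_comul :
    galoisMap R A ∘ₗ (antipode R).lTensor A ∘ₗ comul =
      (Algebra.TensorProduct.includeLeft : A →ₐ[R] A ⊗[R] A).toLinearMap :=
  calc
    _ = (LinearMap.mul' R A).lTensor A ∘ₗ (TensorProduct.assoc R A A A).toLinearMap ∘ₗ
        map (map LinearMap.id LinearMap.id) (antipode R) ∘ₗ comul.rTensor A ∘ₗ comul := by
      rw [map_id, ← LinearMap.comp_assoc _ (comul.rTensor A), LinearMap.map_comp_rTensor,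
        LinearMap.id_comp, ← LinearMap.rTensor_comp_lTensor]
      rfl
    _ = _ := by
      rw [lTensor_mul'_comp_assoc_comp_map_comp_comul, ← LinearMap.lTensor,
        mul_antipode_lTensor_comul, lTensor_algebraLinearMap_counit_comp_comul]

lemma galoisMapInv_comp_galoisMap : galoisMapInv R A ∘ₗ galoisMap R A = LinearMap.id := by
  rw [galoisMap, galoisMapInv, extendMulRight_comp_extendMulRight, ← galoisMapInv,
    galoisMapInv_comp_comul, extendMulRight_includeLeft]

lemma galoisMap_comp_galoisMapInv : galoisMap R A ∘ₗ galoisMapInv R A = LinearMap.id := by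
  rw [galoisMap, galoisMapInv, extendMulRight_comp_extendMulRight, ← galoisMap,
    galoisMap_comp_lTensor_antipode_comp_comul, extendMulRight_includeLeft]

variable {R A}

lemma galoisMap_tmul (x y : A) : galoisMap R A (x ⊗ₜ y) = comul x * (1 ⊗ₜ y) :=
  extendMulRight_tmul _ x y

lemma galoisMap_one_tmul (y : A) : galoisMap R A (1 ⊗ₜ y) = 1 ⊗ₜ y := by
  rw [galoisMap_tmul, Bialgebra.comul_one, one_mul]

lemma galoisMap_smul (a : A) (z : A ⊗[R] A) :
    galoisMap R A (a • z) = comul a * galoisMap R A z := by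
  induction z using TensorProduct.induction_on with
  | zero => simp
  | tmul x y =>
    rw [smul_tmul', smul_eq_mul, galoisMap_tmul, galoisMap_tmul, Bialgebra.comul_mul, mul_assoc]
  | add u v hu hv => rw [smul_add, map_add, map_add, mul_add, hu, hv]

variable (R A)

/-- `A ⊗[R] A` with `A` acting through `Δ`; a synonym, since `A ⊗[R] A` already carries the action
on the left factor. -/
def ComulTensor : Type _ := A ⊗[R] A

noncomputable instance : AddCommMonoid (ComulTensor R A) :=
  inferInstanceAs (AddCommMonoid (A ⊗[R] A))

noncomputable instance : Module A (ComulTensor R A) :=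
  Module.compHom (A ⊗[R] A) (Bialgebra.comulAlgHom R A).toRingHom

noncomputable def galoisEquiv : (A ⊗[R] A) ≃ₗ[A] ComulTensor R A where
  toFun := galoisMap R A
  invFun := galoisMapInv R A
  map_add' := map_add _
  map_smul' := galoisMap_smul
  left_inv := LinearMap.congr_fun (galoisMapInv_comp_galoisMap R A)
  right_inv := LinearMap.congr_fun (galoisMap_comp_galoisMapInv R A)

end GaloisMap

theorem tensor_free_over_comul
    (k A : Type*) [Field k] [Ring A] [HopfAlgebra k A]
    {ι : Type*} (𝔸 : Module.Basis ι k A) :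
    ∃ b : @Module.Basis ι A (A ⊗[k] A) _ _
        (Module.compHom (A ⊗[k] A) (Bialgebra.comulAlgHom k A).toRingHom),
      ∀ i : ι,
        @DFunLike.coe _ _ _
          (@Module.Basis.instFunLike ι A (A ⊗[k] A) _ _
            (Module.compHom (A ⊗[k] A) (Bialgebra.comulAlgHom k A).toRingHom)) b i
          = (1 : A) ⊗ₜ[k] 𝔸 i :=
  ⟨((𝔸.baseChange A).map (galoisEquiv k A) : Module.Basis ι A (ComulTensor k A)), fun i => by
    show galoisMap k A (𝔸.baseChange A i) = _
    rw [Module.Basis.baseChange_apply, galoisMap_one_tmul]⟩
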